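/- arXiv:2104.13481 — 2 statements merged into one kernel-verified Lean document; each statement's English description precedes it below -/
import Mathlib

section
/- Let π : S → T be an idempotent-separating epimorphism of inverse semigroups and ρ : T → S a transversal of π. The following are equivalent: (1) ρ is order-preserving (x ≤ y implies ρ(x) ≤ ρ(y)) and respects idempotents; (2) ρ(e x) = ρ(e)ρ(x) for all e ∈ E(T), x ∈ T; (3) ρ(x e) = ρ(x)ρ(e) for all e ∈ E(T), x ∈ T. -/
/-- An inverse semigroup: every element `s` has a (unique) inverse `s⁻¹`
with `s * s⁻¹ * s = s` and `s⁻¹ * s * s⁻¹ = s⁻¹`. -/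
class InverseSemigroup (S : Type*) extends Semigroup S, Inv S where
  mul_inv_mul : ∀ s : S, s * s⁻¹ * s = s
  inv_mul_inv : ∀ s : S, s⁻¹ * s * s⁻¹ = s⁻¹
  inv_unique : ∀ s t : S, s * t * s = s → t * s * t = t → t = s⁻¹

namespace InverseSemigroup

/-- The set of idempotents of a multiplicative structure. -/
def E (S : Type*) [Mul S] : Set S := {e | e * e = e}

/-- The natural partial order: `s ≤ t` iff `s = s * s⁻¹ * t`. -/
def nle {S : Type*} [Mul S] [Inv S] (s t : S) : Prop := s = s * s⁻¹ * t

/-- `r s = s * s⁻¹`. -/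
def r {S : Type*} [Mul S] [Inv S] (s : S) : S := s * s⁻¹

/-- A Clifford semigroup (semilattice of groups): idempotents are central. -/
def IsClifford (S : Type*) [Mul S] : Prop := ∀ e ∈ E S, ∀ s : S, e * s = s * e

end InverseSemigroup

open InverseSemigroup

/-! Idempotents of an inverse semigroup commute, so `s ≤ t` holds as soon as `s = e t` for an
idempotent `e`. For (1) ⇒ (2): `e x ≤ x` gives `ρ(e x) = ρ(e x) ρ(e x)⁻¹ ρ(x)`, and the idempotents
`ρ(e x) ρ(e x)⁻¹` and `ρ(e) ρ(x) ρ(x)⁻¹` both lie over `e x x⁻¹`, so they coincide because `π`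
separates idempotents; hence `ρ(e x) = ρ(e) ρ(x)`. For (2) ⇒ (1): `ρ(e) = ρ(e e) = ρ(e)²`, and
`x ≤ y` gives `ρ(x) = ρ(x x⁻¹ y) = ρ(x x⁻¹) ρ(y)`. Condition (3) is (2) for the opposite
semigroups, in which the natural order is unchanged. -/

namespace InverseSemigroup

section Basic

variable {S : Type*} [InverseSemigroup S]

protected theorem inv_inv (s : S) : s⁻¹⁻¹ = s :=
  (inv_unique s⁻¹ s (inv_mul_inv s) (mul_inv_mul s)).symm

theorem mul_mul_of_mem_E {e : S} (he : e ∈ E S) (t : S) : e * (e * t) = e * t := by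
  rw [← mul_assoc, he]

theorem inv_eq_self_of_mem_E {e : S} (he : e ∈ E S) : e⁻¹ = e := by
  have h : e * e * e = e := by rw [he, he]
  exact (inv_unique e e h h).symm

theorem mul_inv_mem_E (s : S) : s * s⁻¹ ∈ E S := by
  show s * s⁻¹ * (s * s⁻¹) = s * s⁻¹
  rw [← mul_assoc, mul_inv_mul]

theorem inv_mul_mem_E (s : S) : s⁻¹ * s ∈ E S := by
  show s⁻¹ * s * (s⁻¹ * s) = s⁻¹ * s
  rw [← mul_assoc, inv_mul_inv]

/- With `x = (e f)⁻¹`, the element `f x e` is also an inverse of `e f`, hence equal to `x`;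
this makes `x`, and so `e f = x⁻¹`, idempotent. -/
theorem mul_mem_E {e f : S} (he : e ∈ E S) (hf : f ∈ E S) : e * f ∈ E S := by
  obtain ⟨x, hx⟩ : ∃ x, (e * f)⁻¹ = x := ⟨_, rfl⟩
  have h₁ : e * f * x * (e * f) = e * f := hx ▸ mul_inv_mul (e * f)
  have h₂ : x * (e * f) * x = x := hx ▸ inv_mul_inv (e * f)
  have hfxe : f * x * e = x := by
    refine (inv_unique (e * f) (f * x * e) ?_ ?_).trans hx
    · calc e * f * (f * x * e) * (e * f) = e * (f * f) * x * (e * e) * f := by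
            simp only [mul_assoc]
        _ = e * f := by rw [hf, he, mul_assoc (e * f * x), h₁]
    · calc f * x * e * (e * f) * (f * x * e) = f * (x * (e * e) * (f * f) * x) * e := by
            simp only [mul_assoc]
        _ = f * x * e := by rw [hf, he, mul_assoc x e f, h₂]
  have hxx : x * x = x :=
    calc x * x = f * (x * (e * f) * x) * e := by
          conv_lhs => rw [← hfxe]
          simp only [mul_assoc]
      _ = x := by rw [h₂, hfxe]
  rw [← InverseSemigroup.inv_inv (e * f), hx, inv_eq_self_of_mem_E hxx]
  exact hxx

theorem mul_comm_of_mem_E {e f : S} (he : e ∈ E S) (hf : f ∈ E S) : e * f = f * e := by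
  have hef : e * f * (e * f) = e * f := mul_mem_E he hf
  have hfe : f * e * (f * e) = f * e := mul_mem_E hf he
  have h₁ : e * f * (f * e) * (e * f) = e * f := by
    simpa only [mul_assoc, mul_mul_of_mem_E he, mul_mul_of_mem_E hf] using hef
  have h₂ : f * e * (e * f) * (f * e) = f * e := by
    simpa only [mul_assoc, mul_mul_of_mem_E he, mul_mul_of_mem_E hf] using hfe
  rw [inv_unique (e * f) (f * e) h₁ h₂, inv_eq_self_of_mem_E (mul_mem_E he hf)]

protected theorem mul_inv_rev (a b : S) : (a * b)⁻¹ = b⁻¹ * a⁻¹ := by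
  have hc : ∀ a b : S, a⁻¹ * a * (b * b⁻¹) = b * b⁻¹ * (a⁻¹ * a) := fun a b =>
    mul_comm_of_mem_E (inv_mul_mem_E a) (mul_inv_mem_E b)
  refine (inv_unique (a * b) (b⁻¹ * a⁻¹) ?_ ?_).symm
  · calc a * b * (b⁻¹ * a⁻¹) * (a * b) = a * ((b * b⁻¹) * (a⁻¹ * a)) * b := by
          simp only [mul_assoc]
      _ = (a * a⁻¹ * a) * (b * b⁻¹ * b) := by rw [← hc]; simp only [mul_assoc]
      _ = a * b := by rw [mul_inv_mul, mul_inv_mul]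
  · calc b⁻¹ * a⁻¹ * (a * b) * (b⁻¹ * a⁻¹) = b⁻¹ * ((a⁻¹ * a) * (b * b⁻¹)) * a⁻¹ := by
          simp only [mul_assoc]
      _ = (b⁻¹ * b * b⁻¹) * (a⁻¹ * a * a⁻¹) := by rw [hc]; simp only [mul_assoc]
      _ = b⁻¹ * a⁻¹ := by rw [inv_mul_inv, inv_mul_inv]

theorem idem_mul_mul_inv {e : S} (he : e ∈ E S) (x : S) :
    e * x * (e * x)⁻¹ = e * (x * x⁻¹) := by
  rw [InverseSemigroup.mul_inv_rev, inv_eq_self_of_mem_E he]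
  calc e * x * (x⁻¹ * e) = e * ((x * x⁻¹) * e) := by simp only [mul_assoc]
    _ = e * (x * x⁻¹) := by rw [mul_comm_of_mem_E (mul_inv_mem_E x) he, mul_mul_of_mem_E he]

theorem nle_of_eq_idem_mul {e s t : S} (he : e ∈ E S) (h : s = e * t) : nle s t := by
  show s = s * s⁻¹ * t
  rw [h, idem_mul_mul_inv he, mul_assoc, mul_inv_mul]

theorem nle_of_eq_mul_idem {e s t : S} (he : e ∈ E S) (h : s = t * e) : nle s t := by
  show s = s * s⁻¹ * t
  rw [h, InverseSemigroup.mul_inv_rev, inv_eq_self_of_mem_E he]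
  calc t * e = t * ((t⁻¹ * t) * e) := by rw [← mul_assoc, ← mul_assoc, mul_inv_mul]
    _ = t * e * (e * t⁻¹) * t := by
        rw [← mul_comm_of_mem_E he (inv_mul_mem_E t)]
        simp only [mul_assoc, mul_mul_of_mem_E he]

theorem nle_iff_eq_mul_inv_mul {s t : S} : nle s t ↔ s = t * (s⁻¹ * s) := by
  refine ⟨fun h => ?_, nle_of_eq_mul_idem (inv_mul_mem_E s)⟩
  have hs : s = s * s⁻¹ * t := h
  have hinv : s⁻¹ = t⁻¹ * (s * s⁻¹) := by
    conv_lhs => rw [hs]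
    rw [InverseSemigroup.mul_inv_rev, inv_eq_self_of_mem_E (mul_inv_mem_E s)]
  calc s = s * s⁻¹ * (t * t⁻¹ * t) := by rw [mul_inv_mul, ← hs]
    _ = t * t⁻¹ * (s * s⁻¹) * t := by
        rw [← mul_assoc, mul_comm_of_mem_E (mul_inv_mem_E s) (mul_inv_mem_E t)]
    _ = t * (t⁻¹ * (s * s⁻¹ * t)) := by simp only [mul_assoc]
    _ = t * (t⁻¹ * (s * s⁻¹) * s) := by rw [← hs, mul_assoc t⁻¹, mul_inv_mul]
    _ = t * (s⁻¹ * s) := by rw [← hinv]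

end Basic

open MulOpposite in
instance {S : Type*} [InverseSemigroup S] : InverseSemigroup Sᵐᵒᵖ where
  mul_inv_mul s := unop_injective <| by
    simp only [unop_mul, unop_inv, ← mul_assoc, mul_inv_mul]
  inv_mul_inv s := unop_injective <| by
    simp only [unop_mul, unop_inv, ← mul_assoc, inv_mul_inv]
  inv_unique s t h₁ h₂ := unop_injective <| by
    rw [unop_inv]
    refine inv_unique _ _ ?_ ?_
    · simpa only [unop_mul, mul_assoc] using congrArg unop h₁
    · simpa only [unop_mul, mul_assoc] using congrArg unop h₂

theorem op_mem_E_iff {S : Type*} [Mul S] {e : S} : MulOpposite.op e ∈ E Sᵐᵒᵖ ↔ e ∈ E S :=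
  MulOpposite.op_inj

theorem nle_op_iff {S : Type*} [InverseSemigroup S] {s t : S} :
    nle (MulOpposite.op s) (MulOpposite.op t) ↔ nle s t := by
  rw [nle_iff_eq_mul_inv_mul.trans (MulOpposite.op_inj (α := S)).symm]
  simp only [nle, MulOpposite.op_mul, MulOpposite.op_inv]

theorem map_inv_of_map_mul {S T : Type*} [InverseSemigroup S] [InverseSemigroup T] {π : S → T}
    (hπ : ∀ a b : S, π (a * b) = π a * π b) (a : S) : π a⁻¹ = (π a)⁻¹ :=
  inv_unique _ _ (by rw [← hπ, ← hπ, mul_inv_mul]) (by rw [← hπ, ← hπ, inv_mul_inv])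

section Transversal

variable {S T : Type*} [InverseSemigroup S] [InverseSemigroup T] {π : S → T} {ρ : T → S}

theorem monotone_and_mem_E_iff_map_idem_mul (hπ : ∀ a b : S, π (a * b) = π a * π b)
    (hsep : ∀ a ∈ E S, ∀ b ∈ E S, π a = π b → a = b) (hρ : ∀ t : T, π (ρ t) = t) :
    ((∀ x y : T, nle x y → nle (ρ x) (ρ y)) ∧ (∀ e ∈ E T, ρ e ∈ E S)) ↔
      ∀ e ∈ E T, ∀ x : T, ρ (e * x) = ρ e * ρ x := by
  constructor
  · rintro ⟨hmono, hE⟩ e he x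
    have hle : ρ (e * x) = ρ (e * x) * (ρ (e * x))⁻¹ * ρ x :=
      hmono _ _ (nle_of_eq_idem_mul he rfl)
    have hrange : ρ (e * x) * (ρ (e * x))⁻¹ = ρ e * (ρ x * (ρ x)⁻¹) :=
      hsep _ (mul_inv_mem_E _) _ (mul_mem_E (hE e he) (mul_inv_mem_E _)) <| by
        simp only [hπ, map_inv_of_map_mul hπ, hρ, idem_mul_mul_inv he]
    rw [hle, hrange, mul_assoc, mul_inv_mul]
  · intro h
    have hE : ∀ e ∈ E T, ρ e ∈ E S := fun e he => by
      show ρ e * ρ e = ρ e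
      rw [← h e he e, he]
    refine ⟨fun x y hxy => nle_of_eq_idem_mul (hE _ (mul_inv_mem_E x)) ?_, hE⟩
    exact (congrArg ρ hxy).trans (h _ (mul_inv_mem_E x) y)

theorem monotone_and_mem_E_iff_map_mul_idem (hπ : ∀ a b : S, π (a * b) = π a * π b)
    (hsep : ∀ a ∈ E S, ∀ b ∈ E S, π a = π b → a = b) (hρ : ∀ t : T, π (ρ t) = t) :
    ((∀ x y : T, nle x y → nle (ρ x) (ρ y)) ∧ (∀ e ∈ E T, ρ e ∈ E S)) ↔
      ∀ e ∈ E T, ∀ x : T, ρ (x * e) = ρ x * ρ e := by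
  have hop := monotone_and_mem_E_iff_map_idem_mul (π := fun a : Sᵐᵒᵖ => MulOpposite.op (π a.unop))
    (ρ := fun t : Tᵐᵒᵖ => MulOpposite.op (ρ t.unop))
    (fun a b => by simp only [MulOpposite.unop_mul, hπ, MulOpposite.op_mul])
    (fun a ha b hb hab => MulOpposite.unop_injective <|
      hsep _ (op_mem_E_iff.mp ha) _ (op_mem_E_iff.mp hb) (MulOpposite.op_injective hab))
    (fun t => by simp only [MulOpposite.unop_op, hρ, MulOpposite.op_unop])
  simpa only [MulOpposite.op_surjective.forall, nle_op_iff, op_mem_E_iff, MulOpposite.unop_op,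
    MulOpposite.unop_mul, ← MulOpposite.op_mul, MulOpposite.op_inj] using hop

end Transversal

end InverseSemigroup

theorem transversal_order_preserving_tfae_general {S T : Type*} [InverseSemigroup S] [InverseSemigroup T]
    (π : S → T) (hπ : ∀ a b : S, π (a * b) = π a * π b)
    (hsep : ∀ a ∈ E S, ∀ b ∈ E S, π a = π b → a = b)
    (ρ : T → S) (hρ : ∀ t : T, π (ρ t) = t) :
    (((∀ x y : T, nle x y → nle (ρ x) (ρ y)) ∧ (∀ e ∈ E T, ρ e ∈ E S)) ↔
      (∀ e ∈ E T, ∀ x : T, ρ (e * x) = ρ e * ρ x)) ∧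
    (((∀ x y : T, nle x y → nle (ρ x) (ρ y)) ∧ (∀ e ∈ E T, ρ e ∈ E S)) ↔
      (∀ e ∈ E T, ∀ x : T, ρ (x * e) = ρ x * ρ e)) :=
  ⟨monotone_and_mem_E_iff_map_idem_mul hπ hsep hρ, monotone_and_mem_E_iff_map_mul_idem hπ hsep hρ⟩

/-- For a transversal `ρ` of an idempotent-separating epimorphism `π`, being
order-preserving and idempotent-respecting is equivalent to `ρ(e x) = ρ(e) ρ(x)`,
and also to `ρ(x e) = ρ(x) ρ(e)`. -/
theorem transversal_order_preserving_tfae {S T : Type*} [InverseSemigroup S] [InverseSemigroup T]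
    (π : S → T) (hπ : ∀ a b : S, π (a * b) = π a * π b)
    (hsurj : Function.Surjective π)
    (hsep : ∀ a ∈ E S, ∀ b ∈ E S, π a = π b → a = b)
    (ρ : T → S) (hρ : ∀ t : T, π (ρ t) = t) :
    (((∀ x y : T, nle x y → nle (ρ x) (ρ y)) ∧ (∀ e ∈ E T, ρ e ∈ E S)) ↔
      (∀ e ∈ E T, ∀ x : T, ρ (e * x) = ρ e * ρ x)) ∧
    (((∀ x y : T, nle x y → nle (ρ x) (ρ y)) ∧ (∀ e ∈ E T, ρ e ∈ E S)) ↔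
      (∀ e ∈ E T, ∀ x : T, ρ (x * e) = ρ x * ρ e)) :=
  transversal_order_preserving_tfae_general π hπ hsep ρ hρ
end

section
/- Let T be an inverse semigroup, FG(T) the free group on T, and ν : FG(T) → T¹ the evaluation of reduced words. Let Φ(t) = ψ(φ⁻¹(t)), where φ : F(T ⊔ T⁻¹) → T is the evaluation homomorphism and ψ : F(T ⊔ T⁻¹) → FG(T) the natural projection. Then for all t ∈ T and w ∈ FG(T): w ∈ Φ(t) if and only if t ≤ ν(w). -/
open InverseSemigroup

/-- Evaluate a word over the alphabet `T ⊔ T⁻¹` (encoded as `List (T × Bool)`,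
with `(x, true) = [x]` and `(x, false) = [x]⁻¹`) in `T¹ = WithOne T`;
the empty word evaluates to `1`. -/
def evalWord {T : Type*} [InverseSemigroup T] (l : List (T × Bool)) : WithOne T :=
  l.foldr (fun p acc => (↑(if p.2 then p.1 else p.1⁻¹) : WithOne T) * acc) 1

/-- The map `ν : FG(T) → T¹` evaluating the reduced word of an element of the free
group on `T`; `ν(ε) = 1`. -/
def nu {T : Type*} [InverseSemigroup T] [DecidableEq T] (w : FreeGroup T) : WithOne T :=
  evalWord (FreeGroup.toWord w)

/-!
Free reduction only increases the value of a word in the natural order: the word `u x x⁻¹ v`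
evaluates to `u (x x⁻¹) v`, and `x x⁻¹` is idempotent, while `s ≤ t` means `s = e t` for an
idempotent `e` and this order is compatible with left multiplication (idempotents commute).
Hence any word evaluating to `t` lies below its reduced form, which is the reduced word of its
image in the free group. Conversely, if `t ≤ ν(w)` then the word `t t⁻¹ w` evaluates to
`t t⁻¹ ν(w) = t` and represents `w` in the free group.
-/

namespace InverseSemigroup

variable {S : Type*} [InverseSemigroup S]

theorem inv_eq_self_of_isIdempotentElem {e : S} (he : IsIdempotentElem e) : e⁻¹ = e :=
  (inv_unique e e (by rw [he.eq, he.eq]) (by rw [he.eq, he.eq])).symm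

theorem isIdempotentElem_mul_inv (s : S) : IsIdempotentElem (s * s⁻¹) := by
  rw [IsIdempotentElem, mul_assoc, ← mul_assoc s⁻¹, inv_mul_inv]

theorem isIdempotentElem_inv_mul (s : S) : IsIdempotentElem (s⁻¹ * s) := by
  simpa only [InverseSemigroup.inv_inv] using isIdempotentElem_mul_inv s⁻¹

/-- With `x = (e * f)⁻¹`, the element `f * x * e` is also an inverse of `e * f`, so it equals `x`;
this forces `x`, hence also `e * f = x⁻¹`, to be idempotent. -/
theorem isIdempotentElem_mul {e f : S} (he : IsIdempotentElem e) (hf : IsIdempotentElem f) :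
    IsIdempotentElem (e * f) := by
  set x := (e * f)⁻¹ with hx
  have hxefx : x * (e * f) * x = x := inv_mul_inv (e * f)
  have hfxe : f * x * e = x := by
    refine inv_unique (e * f) (f * x * e) ?_ ?_
    · calc e * f * (f * x * e) * (e * f) = e * f * x * (e * f) := by
            simp only [mul_assoc, he.mul_self_mul, hf.mul_self_mul]
        _ = e * f := mul_inv_mul (e * f)
    · calc f * x * e * (e * f) * (f * x * e) = f * (x * (e * f) * x) * e := by
            simp only [mul_assoc, he.mul_self_mul, hf.mul_self_mul]
        _ = f * x * e := by rw [hxefx, mul_assoc]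
  have hx_idem : IsIdempotentElem x := by
    calc x * x = f * (x * (e * f) * x) * e := by
          conv_lhs => rw [← hfxe]
          simp only [mul_assoc]
      _ = x := by rw [hxefx, hfxe]
  rwa [← InverseSemigroup.inv_inv (e * f), ← hx, inv_eq_self_of_isIdempotentElem hx_idem]

theorem commute_of_isIdempotentElem {e f : S} (he : IsIdempotentElem e)
    (hf : IsIdempotentElem f) : Commute e f := by
  have hef := isIdempotentElem_mul he hf
  have hfe := isIdempotentElem_mul hf he
  refine ((inv_unique (e * f) (f * e) ?_ ?_).trans (inv_eq_self_of_isIdempotentElem hef)).symm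
  · calc e * f * (f * e) * (e * f) = e * f * (e * f) := by
          simp only [mul_assoc, he.mul_self_mul, hf.mul_self_mul]
      _ = e * f := hef
  · calc f * e * (e * f) * (f * e) = f * e * (f * e) := by
          simp only [mul_assoc, he.mul_self_mul, hf.mul_self_mul]
      _ = f * e := hfe

protected theorem mul_inv_rev_s13 (s t : S) : (s * t)⁻¹ = t⁻¹ * s⁻¹ := by
  have h := commute_of_isIdempotentElem (isIdempotentElem_mul_inv t) (isIdempotentElem_inv_mul s)
  refine (inv_unique (s * t) (t⁻¹ * s⁻¹) ?_ ?_).symm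
  · calc s * t * (t⁻¹ * s⁻¹) * (s * t) = s * (t * t⁻¹ * (s⁻¹ * s)) * t := by
          simp only [mul_assoc]
      _ = s * s⁻¹ * s * (t * t⁻¹ * t) := by rw [h.eq]; simp only [mul_assoc]
      _ = s * t := by rw [mul_inv_mul, mul_inv_mul]
  · calc t⁻¹ * s⁻¹ * (s * t) * (t⁻¹ * s⁻¹) = t⁻¹ * (s⁻¹ * s * (t * t⁻¹)) * s⁻¹ := by
          simp only [mul_assoc]
      _ = t⁻¹ * t * t⁻¹ * (s⁻¹ * s * s⁻¹) := by rw [← h.eq]; simp only [mul_assoc]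
      _ = t⁻¹ * s⁻¹ := by rw [inv_mul_inv, inv_mul_inv]

theorem isIdempotentElem_conj (a : S) {e : S} (he : IsIdempotentElem e) :
    IsIdempotentElem (a * e * a⁻¹) := by
  have h := commute_of_isIdempotentElem he (isIdempotentElem_inv_mul a)
  calc a * e * a⁻¹ * (a * e * a⁻¹) = a * (e * (a⁻¹ * a)) * (e * a⁻¹) := by simp only [mul_assoc]
    _ = a * a⁻¹ * a * (e * e) * a⁻¹ := by rw [h.eq]; simp only [mul_assoc]
    _ = a * e * a⁻¹ := by rw [mul_inv_mul, he.eq]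

theorem nle_of_eq_mul {e s t : S} (he : IsIdempotentElem e) (h : s = e * t) : nle s t := by
  have hinv : s⁻¹ = t⁻¹ * e := by rw [h, InverseSemigroup.mul_inv_rev_s13, inv_eq_self_of_isIdempotentElem he]
  have hcomm := commute_of_isIdempotentElem he (isIdempotentElem_mul_inv t)
  calc s = e * (e * (t * t⁻¹ * t)) := by rw [mul_inv_mul, he.mul_self_mul, h]
    _ = e * (t * t⁻¹ * e) * t := by rw [← hcomm.eq]; simp only [mul_assoc]
    _ = s * s⁻¹ * t := by rw [hinv, h]; simp only [mul_assoc]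

theorem nle_iff_exists_isIdempotentElem {s t : S} :
    nle s t ↔ ∃ e, IsIdempotentElem e ∧ s = e * t :=
  ⟨fun h => ⟨s * s⁻¹, isIdempotentElem_mul_inv s, h⟩, fun ⟨_, he, h⟩ => nle_of_eq_mul he h⟩

theorem nle_refl (s : S) : nle s s := (mul_inv_mul s).symm

theorem nle_trans {s t u : S} (hst : nle s t) (htu : nle t u) : nle s u := by
  obtain ⟨e, he, rfl⟩ := nle_iff_exists_isIdempotentElem.mp hst
  obtain ⟨f, hf, rfl⟩ := nle_iff_exists_isIdempotentElem.mp htu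
  exact nle_of_eq_mul (isIdempotentElem_mul he hf) (mul_assoc e f u).symm

theorem nle_mul_left (a : S) {s t : S} (h : nle s t) : nle (a * s) (a * t) := by
  obtain ⟨e, he, rfl⟩ := nle_iff_exists_isIdempotentElem.mp h
  refine nle_of_eq_mul (isIdempotentElem_conj a he) ?_
  have hc := commute_of_isIdempotentElem he (isIdempotentElem_inv_mul a)
  calc a * (e * t) = a * (a⁻¹ * a * e) * t := by simp only [← mul_assoc, mul_inv_mul]
    _ = a * e * a⁻¹ * (a * t) := by rw [← hc.eq]; simp only [mul_assoc]

theorem nle_mul_inv_mul (s t : S) : nle (s * s⁻¹ * t) t :=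
  nle_of_eq_mul (isIdempotentElem_mul_inv s) rfl

end InverseSemigroup

instance WithOne.instInverseSemigroup (T : Type*) [InverseSemigroup T] :
    InverseSemigroup (WithOne T) where
  mul_inv_mul s := by
    induction s using WithOne.recOneCoe with
    | one => simp
    | coe a => rw [← WithOne.coe_inv, ← WithOne.coe_mul, ← WithOne.coe_mul, mul_inv_mul]
  inv_mul_inv s := by
    induction s using WithOne.recOneCoe with
    | one => simp
    | coe a => rw [← WithOne.coe_inv, ← WithOne.coe_mul, ← WithOne.coe_mul, inv_mul_inv]
  inv_unique s t hsts htst := by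
    induction s using WithOne.recOneCoe with
    | one => simpa using hsts
    | coe a =>
      induction t using WithOne.recOneCoe with
      | one => simp at htst
      | coe b =>
        rw [← WithOne.coe_mul, ← WithOne.coe_mul, WithOne.coe_inj] at hsts htst
        rw [← WithOne.coe_inv, WithOne.coe_inj]
        exact inv_unique a b hsts htst

section Words

variable {T : Type*} [InverseSemigroup T]

-- The coercion sits inside the branches, as in the elaborated body of `evalWord`, so that
-- `evalWord_cons` holds by `rfl`.
def evalLetter (p : T × Bool) : WithOne T := if p.2 then (p.1 : WithOne T) else (p.1⁻¹ : T)

theorem evalLetter_not (x : T) (b : Bool) : evalLetter (x, !b) = (evalLetter (x, b))⁻¹ := by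
  cases b <;> simp [evalLetter, WithOne.coe_inv, InverseSemigroup.inv_inv]

theorem evalWord_cons (p : T × Bool) (l : List (T × Bool)) :
    evalWord (p :: l) = evalLetter p * evalWord l :=
  rfl

theorem evalWord_append (l₁ l₂ : List (T × Bool)) :
    evalWord (l₁ ++ l₂) = evalWord l₁ * evalWord l₂ := by
  induction l₁ with
  | nil => exact (one_mul _).symm
  | cons p l ih => rw [List.cons_append, evalWord_cons, evalWord_cons, ih, mul_assoc]

theorem nle_evalWord_of_step {l₁ l₂ : List (T × Bool)} (h : FreeGroup.Red.Step l₁ l₂) :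
    nle (evalWord l₁) (evalWord l₂) := by
  obtain @⟨u, v, x, b⟩ := h
  rw [evalWord_append, evalWord_append, evalWord_cons, evalWord_cons, evalLetter_not,
    ← mul_assoc (evalLetter (x, b))]
  exact nle_mul_left (evalWord u) (nle_mul_inv_mul (evalLetter (x, b)) (evalWord v))

theorem nle_evalWord_of_red {l₁ l₂ : List (T × Bool)} (h : FreeGroup.Red l₁ l₂) :
    nle (evalWord l₁) (evalWord l₂) := by
  induction h with
  | refl => exact nle_refl (evalWord _)
  | tail _ hstep ih => exact nle_trans ih (nle_evalWord_of_step hstep)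

end Words

/-- `w ∈ Φ(t)` iff `t ≤ ν(w)`, where `Φ(t) = ψ(φ⁻¹(t))` with `φ` the evaluation of
nonempty words in `T` and `ψ` the projection onto the free group. -/
theorem mem_Phi_iff_le_nu {T : Type*} [InverseSemigroup T] [DecidableEq T]
    (t : T) (w : FreeGroup T) :
    (∃ l : List (T × Bool), l ≠ [] ∧ evalWord l = (t : WithOne T) ∧ FreeGroup.mk l = w) ↔
      nle (t : WithOne T) (nu w) := by
  constructor
  · rintro ⟨l, -, hl, rfl⟩
    rw [← hl, nu, FreeGroup.toWord_mk]
    exact nle_evalWord_of_red FreeGroup.reduce.red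
  · intro h
    refine ⟨(t, true) :: (t, false) :: w.toWord, List.cons_ne_nil _ _, ?_, ?_⟩
    · rw [evalWord_cons, evalWord_cons, ← mul_assoc]
      exact h.symm
    · exact (Quot.sound FreeGroup.Red.Step.cons_not).trans FreeGroup.mk_toWord
end
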